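/- Let K be a field with char(K) ≠ 2 and let β be the involution of A₁(K) with β(x) = x, β(y) = -y. Suppose P₀ ∈ A₁(K) satisfies β(P₀) = P₀. Then writing the (1,0)-leading term of P₀ in normal form as x^r g(y), the polynomial g lies in K[y²] (g is an even polynomial). -/

import Mathlib

open scoped BigOperators

variable (K : Type*) [Field K]

/-- Defining relation of the first Weyl algebra: `y*x = x*y + 1`. -/
inductive WeylRel : FreeAlgebra K (Fin 2) → FreeAlgebra K (Fin 2) → Prop
  | rel : WeylRel (FreeAlgebra.ι K 1 * FreeAlgebra.ι K 0) (FreeAlgebra.ι K 0 * FreeAlgebra.ι K 1 + 1)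

/-- The first Weyl algebra `A₁(K) = K⟨x,y⟩/(yx - xy - 1)`. -/
abbrev Weyl := RingQuot (WeylRel K)

/-- The generator `x` of `A₁(K)`. -/
abbrev wx : Weyl K := RingQuot.mkAlgHom K (WeylRel K) (FreeAlgebra.ι K 0)

/-- The generator `y` of `A₁(K)`. -/
abbrev wy : Weyl K := RingQuot.mkAlgHom K (WeylRel K) (FreeAlgebra.ι K 1)

/-- `IsBetaInv β` says that `β` is the K-linear unital antiautomorphism-data of `A₁(K)`
determined by `β(x) = x`, `β(y) = -y`. -/
def IsBetaInv (β : Weyl K → Weyl K) : Prop :=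
  (∀ u v, β (u + v) = β u + β v) ∧ (∀ (c : K) (u), β (c • u) = c • β u) ∧
  (∀ u v, β (u * v) = β v * β u) ∧ β 1 = 1 ∧ β (wx K) = wx K ∧ β (wy K) = -(wy K)

/-!
Let `A₁(K)` act on `K[X₀, X₁]` by `x ↦ X₀ ·` and `y ↦ X₁ · + ∂/∂X₀`. Applied to `1`, the
monomial `xⁱ yᵏ` gives `X₀ⁱ X₁ᵏ`, while `yᵏ xⁱ` gives `X₀ⁱ X₁ᵏ` plus terms of smaller
`X₀`-degree. Hence the coefficient of `X₀ʳ X₁ʲ` in `P₀ · 1` is `a (r, j)` and, since `β` sends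
`xⁱ yᵏ` to `(-1)ᵏ yᵏ xⁱ` and `r` is the top `x`-degree, in `β(P₀) · 1` it is `(-1)ʲ a (r, j)`.
For odd `j` and `β(P₀) = P₀` this forces `2 a (r, j) = 0`.
-/

open MvPolynomial

namespace Weyl

noncomputable def mulX : Module.End K (MvPolynomial (Fin 2) K) :=
  LinearMap.mulLeft K (X 0)

noncomputable def diffY : Module.End K (MvPolynomial (Fin 2) K) :=
  LinearMap.mulLeft K (X 1) + (pderiv 0).toLinearMap

lemma diffY_mul_mulX : diffY K * mulX K = mulX K * diffY K + 1 := by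
  refine LinearMap.ext fun f => ?_
  simp [mulX, diffY, Module.End.mul_apply]
  ring

noncomputable def polyRep : Weyl K →ₐ[K] Module.End K (MvPolynomial (Fin 2) K) :=
  RingQuot.liftAlgHom K ⟨FreeAlgebra.lift K ![mulX K, diffY K], by
    rintro _ _ ⟨⟩
    simp [diffY_mul_mulX]⟩

noncomputable def bideg (i k : ℕ) : Fin 2 →₀ ℕ := Finsupp.single 0 i + Finsupp.single 1 k

noncomputable def coeffAt (r j : ℕ) : Weyl K →ₗ[K] K :=
  lcoeff K (bideg r j) ∘ₗ LinearMap.applyₗ 1 ∘ₗ (polyRep K).toLinearMap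

variable {K}

lemma polyRep_wx : polyRep K (wx K) = mulX K := by
  simp [polyRep]

lemma polyRep_wy : polyRep K (wy K) = diffY K := by
  simp [polyRep]

lemma diffY_apply (f : MvPolynomial (Fin 2) K) : diffY K f = X 1 * f + pderiv 0 f :=
  rfl

lemma bideg_zero (i k : ℕ) : bideg i k 0 = i := by
  simp [bideg]

lemma bideg_inj {i k i' k' : ℕ} : bideg i k = bideg i' k' ↔ (i, k) = (i', k') := by
  refine ⟨fun h => ?_, fun h => by simp_all⟩
  have h0 := DFunLike.congr_fun h 0
  have h1 := DFunLike.congr_fun h 1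
  simp only [bideg, Finsupp.add_apply, Finsupp.single_apply] at h0 h1
  simp_all

lemma X_pow_mul_X_pow (i k : ℕ) :
    (X 0 : MvPolynomial (Fin 2) K) ^ i * X 1 ^ k = monomial (bideg i k) 1 := by
  rw [X_pow_eq_monomial, X_pow_eq_monomial, monomial_mul, one_mul, bideg]

/-- Every `∂/∂X₀` in the expansion of `(X₁ · + ∂/∂X₀)ᵏ` pushes the `X₀`-degree below `i`. -/
lemma coeff_diffY_pow_X_pow (k i : ℕ) {m : Fin 2 →₀ ℕ} (him : i ≤ m 0) :
    coeff m ((diffY K ^ k) (X 0 ^ i)) = coeff m ((X 0 : MvPolynomial (Fin 2) K) ^ i * X 1 ^ k) := by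
  induction k generalizing m with
  | zero => simp
  | succ k ih =>
    have hderiv : coeff m (pderiv 0 ((diffY K ^ k) (X 0 ^ i))) = 0 := by
      rw [coeff_pderiv, ih (by simp; omega), X_pow_mul_X_pow, coeff_monomial, if_neg, zero_mul]
      intro h
      have := congrArg (· 0) h
      simp [bideg_zero] at this
      omega
    rw [pow_succ', Module.End.mul_apply, diffY_apply, coeff_add, hderiv, add_zero, pow_succ',
      mul_left_comm, coeff_X_mul', coeff_X_mul']
    split_ifs
    · exact ih (by simpa using him)
    · rfl

lemma diffY_pow_one (k : ℕ) : (diffY K ^ k) 1 = (X 1 : MvPolynomial (Fin 2) K) ^ k := by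
  ext m
  simpa using coeff_diffY_pow_X_pow k 0 (Nat.zero_le (m 0))

lemma polyRep_x_pow_mul_y_pow_one (i k : ℕ) :
    polyRep K (wx K ^ i * wy K ^ k) 1 = (X 0 : MvPolynomial (Fin 2) K) ^ i * X 1 ^ k := by
  rw [map_mul, map_pow, map_pow, polyRep_wx, polyRep_wy, Module.End.mul_apply, diffY_pow_one,
    mulX, LinearMap.pow_mulLeft, LinearMap.mulLeft_apply]

lemma coeffAt_x_pow_mul_y_pow (r j i k : ℕ) :
    coeffAt K r j (wx K ^ i * wy K ^ k) = if (i, k) = (r, j) then 1 else 0 := by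
  rw [coeffAt, LinearMap.comp_apply, LinearMap.comp_apply, AlgHom.toLinearMap_apply,
    LinearMap.applyₗ_apply_apply, polyRep_x_pow_mul_y_pow_one, lcoeff_apply, X_pow_mul_X_pow,
    coeff_monomial]
  simp [bideg_inj]

lemma coeffAt_y_pow_mul_x_pow {r i : ℕ} (hi : i ≤ r) (j k : ℕ) :
    coeffAt K r j (wy K ^ k * wx K ^ i) = if (i, k) = (r, j) then 1 else 0 := by
  have hx : (polyRep K (wx K) ^ i) 1 = X 0 ^ i := by
    rw [polyRep_wx, mulX, LinearMap.pow_mulLeft, LinearMap.mulLeft_apply, mul_one]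
  simp only [coeffAt, LinearMap.coe_comp, Function.comp_apply, AlgHom.toLinearMap_apply,
    LinearMap.applyₗ_apply_apply, lcoeff_apply, map_mul, Module.End.mul_apply, hx, map_pow,
    polyRep_wy]
  rw [coeff_diffY_pow_X_pow k i (by rwa [bideg_zero]), X_pow_mul_X_pow, coeff_monomial]
  simp [bideg_inj]

end Weyl

namespace IsBetaInv

variable {K} {β : Weyl K → Weyl K}

def toLinearMap (hβ : IsBetaInv K β) : Weyl K →ₗ[K] Weyl K where
  toFun := β
  map_add' := hβ.1
  map_smul' := hβ.2.1

lemma coe_toLinearMap (hβ : IsBetaInv K β) : ⇑hβ.toLinearMap = β :=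
  rfl

lemma map_pow (hβ : IsBetaInv K β) (u : Weyl K) (n : ℕ) : β (u ^ n) = β u ^ n := by
  induction n with
  | zero => simpa using hβ.2.2.2.1
  | succ n ih => rw [pow_succ, hβ.2.2.1, ih, pow_succ']

lemma map_x_pow_mul_y_pow (hβ : IsBetaInv K β) (i k : ℕ) :
    β (wx K ^ i * wy K ^ k) = (-1 : K) ^ k • (wy K ^ k * wx K ^ i) := by
  rw [hβ.2.2.1, hβ.map_pow, hβ.map_pow, hβ.2.2.2.2.1, hβ.2.2.2.2.2, ← neg_one_smul K (wy K),
    smul_pow, smul_mul_assoc]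

end IsBetaInv

lemma LinearMap.map_sum_smul_eq_single {α R M : Type*} [DecidableEq α] [CommSemiring R]
    [AddCommMonoid M] [Module R M] (φ : M →ₗ[R] R) (a : α →₀ R) (u : α → M) (q : α) (g : α → R)
    (h : ∀ p ∈ a.support, φ (u p) = if p = q then g p else 0) :
    φ (∑ p ∈ a.support, a p • u p) = a q * g q := by
  by_cases hq : q ∈ a.support
  · rw [map_sum, Finset.sum_eq_single_of_mem q hq
      (fun p hp hpq => by rw [map_smul, h p hp, if_neg hpq, smul_zero]),
      map_smul, h q hq, if_pos rfl, smul_eq_mul]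
  · rw [Finsupp.notMem_support_iff.mp hq, zero_mul, map_sum]
    refine Finset.sum_eq_zero fun p hp => ?_
    rw [map_smul, h p hp, if_neg (by rintro rfl; exact hq hp), smul_zero]

open Weyl in
theorem stmt_8 (hK : (2 : K) ≠ 0) (β : Weyl K → Weyl K) (hβ : IsBetaInv K β)
    (P₀ : Weyl K) (hP : β P₀ = P₀)
    (a : (ℕ × ℕ) →₀ K) (hP0 : P₀ = ∑ p ∈ a.support, a p • (wx K ^ p.1 * wy K ^ p.2))
    (r : ℕ) (hr : ∀ p ∈ a.support, p.1 ≤ r) :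
    ∀ j : ℕ, Odd j → a (r, j) = 0 := by
  intro j hj
  have hcoeff : coeffAt K r j P₀ = a (r, j) := by
    rw [hP0, (coeffAt K r j).map_sum_smul_eq_single a _ (r, j) 1
      fun p _ => coeffAt_x_pow_mul_y_pow r j p.1 p.2, Pi.one_apply, mul_one]
  have hβP : β P₀ = ∑ p ∈ a.support, a p • ((-1 : K) ^ p.2 • (wy K ^ p.2 * wx K ^ p.1)) := by
    rw [hP0, ← hβ.coe_toLinearMap, map_sum]
    simp only [map_smul, hβ.coe_toLinearMap, hβ.map_x_pow_mul_y_pow]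
  have hcoeff_β : coeffAt K r j (β P₀) = a (r, j) * (-1) ^ j := by
    refine hβP ▸ (coeffAt K r j).map_sum_smul_eq_single a _ (r, j) (fun p => (-1) ^ p.2)
      fun p hp => ?_
    rw [map_smul, coeffAt_y_pow_mul_x_pow (hr p hp), smul_ite, smul_eq_mul, mul_one, smul_zero]
  rw [hP, hcoeff, hj.neg_one_pow] at hcoeff_β
  have htwo : (2 : K) * a (r, j) = 0 := by linear_combination hcoeff_β
  exact (mul_eq_zero.mp htwo).resolve_left hK
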